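/- arXiv:1807.02476 — 4 statements merged into one kernel-verified Lean document; each statement's English description precedes it below -/
import Mathlib

section
/- Let f : [0,1] → ℝ be continuous. Then for every x ∈ [0,1] the function t ↦ u1(x,t) is Lebesgue integrable on [0,∞) and ∫_0^∞ |u1(x,t)| dt ≤ ‖f‖_∞ / 3, where ‖f‖_∞ = sup_{y∈[0,1]} |f(y)|. -/
open MeasureTheory Set
open scoped Real

/-- `u1 f x t = 2 Σ_{n=1}^∞ (∫_0^1 f(y) sin(nπy) dy) e^{−n²π²t} sin(nπx)`. -/
noncomputable def u1 (f : ℝ → ℝ) (x t : ℝ) : ℝ :=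
  2 * ∑' n : ℕ,
    (∫ y in (0:ℝ)..1, f y * Real.sin (((n : ℝ) + 1) * π * y)) *
      Real.exp (-(((n : ℝ) + 1) ^ 2) * π ^ 2 * t) * Real.sin (((n : ℝ) + 1) * π * x)

/-!
With `M = sup_{[0,1]} |f|`, the `n`-th mode of `u1 f x` is bounded by `2 M e^{-n²π²t}`, since
the sine coefficient of `f` is at most `M` in absolute value. As `∫_0^∞ e^{-λt} dt = 1/λ`, the
integrals of the moduli of the modes form a convergent series, so the series may be integrated
termwise and `∫_0^∞ |u1 f x t| dt ≤ 2M Σ_{n ≥ 1} 1/(n²π²) = 2M · (1/6) = M/3` by `ζ(2) = π²/6`.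
-/

open Real

section SeriesOfIntegrable

variable {α E ι : Type*} [MeasurableSpace α] {μ : Measure α} [NormedAddCommGroup E]
  {F : ι → α → E}

theorem tsum_lintegral_enorm_eq_ofReal (hF : ∀ i, Integrable (F i) μ)
    (hF_sum : Summable fun i ↦ ∫ a, ‖F i a‖ ∂μ) :
    ∑' i, ∫⁻ a, ‖F i a‖ₑ ∂μ = ENNReal.ofReal (∑' i, ∫ a, ‖F i a‖ ∂μ) := by
  rw [ENNReal.ofReal_tsum_of_nonneg (fun i ↦ integral_nonneg fun _ ↦ norm_nonneg _) hF_sum]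
  exact tsum_congr fun i ↦ (ofReal_integral_norm_eq_lintegral_enorm (hF i)).symm

variable [Countable ι]

theorem lintegral_enorm_tsum_le (hF : ∀ i, AEStronglyMeasurable (F i) μ) :
    ∫⁻ a, ‖∑' i, F i a‖ₑ ∂μ ≤ ∑' i, ∫⁻ a, ‖F i a‖ₑ ∂μ :=
  (lintegral_mono fun _ ↦ enorm_tsum_le_tsum_enorm).trans_eq
    (lintegral_tsum fun i ↦ (hF i).enorm)

theorem aestronglyMeasurable_tsum [CompleteSpace E] (hF : ∀ i, AEStronglyMeasurable (F i) μ)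
    (hF_sum : ∑' i, ∫⁻ a, ‖F i a‖ₑ ∂μ ≠ ⊤) :
    AEStronglyMeasurable (fun a ↦ ∑' i, F i a) μ := by
  have h_summable : ∀ᵐ a ∂μ, Summable fun i ↦ ‖F i a‖ :=
    summable_norm_of_tsum_eLpNorm_ne_top le_rfl hF (by simpa [eLpNorm_one_eq_lintegral_enorm])
  refine aestronglyMeasurable_of_tendsto_ae Filter.atTop
    (fun s ↦ Finset.aestronglyMeasurable_sum s fun i _ ↦ hF i) ?_
  filter_upwards [h_summable] with a ha
  simp only [Finset.sum_apply]
  exact ha.of_norm.hasSum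

variable [CompleteSpace E]

theorem integrable_tsum_of_summable_integral_norm (hF : ∀ i, Integrable (F i) μ)
    (hF_sum : Summable fun i ↦ ∫ a, ‖F i a‖ ∂μ) :
    Integrable (fun a ↦ ∑' i, F i a) μ := by
  have h_fin := tsum_lintegral_enorm_eq_ofReal hF hF_sum
  refine ⟨aestronglyMeasurable_tsum (fun i ↦ (hF i).1) (h_fin ▸ ENNReal.ofReal_ne_top), ?_⟩
  exact (lintegral_enorm_tsum_le fun i ↦ (hF i).1).trans_lt (h_fin ▸ ENNReal.ofReal_lt_top)

theorem integral_norm_tsum_le_of_summable_integral_norm (hF : ∀ i, Integrable (F i) μ)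
    (hF_sum : Summable fun i ↦ ∫ a, ‖F i a‖ ∂μ) :
    ∫ a, ‖∑' i, F i a‖ ∂μ ≤ ∑' i, ∫ a, ‖F i a‖ ∂μ := by
  rw [integral_norm_eq_lintegral_enorm (integrable_tsum_of_summable_integral_norm hF hF_sum).1]
  refine ENNReal.toReal_le_of_le_ofReal
    (tsum_nonneg fun i ↦ integral_nonneg fun _ ↦ norm_nonneg _) ?_
  exact (lintegral_enorm_tsum_le fun i ↦ (hF i).1).trans_eq
    (tsum_lintegral_enorm_eq_ofReal hF hF_sum)

end SeriesOfIntegrable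

section ExponentialSeries

theorem integral_norm_mul_exp_mul_Ioi (c : ℝ) {a : ℝ} (ha : a < 0) :
    ∫ t in Ioi 0, ‖c * exp (a * t)‖ = |c| / -a := by
  simp_rw [norm_mul, Real.norm_eq_abs, abs_exp]
  rw [integral_const_mul, integral_exp_mul_Ioi ha, mul_zero, exp_zero, neg_div, ← div_neg,
    mul_one_div]

variable {ι : Type*} [Countable ι] {c a : ι → ℝ}

theorem integrableOn_tsum_mul_exp_mul_Ioi (ha : ∀ i, a i < 0)
    (hs : Summable fun i ↦ |c i| / -a i) :
    IntegrableOn (fun t ↦ ∑' i, c i * exp (a i * t)) (Ioi 0) :=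
  integrable_tsum_of_summable_integral_norm
    (fun i ↦ (integrableOn_exp_mul_Ioi (ha i) 0).const_mul (c i))
    (by simpa only [integral_norm_mul_exp_mul_Ioi _ (ha _)] using hs)

theorem integral_abs_tsum_mul_exp_mul_Ioi_le (ha : ∀ i, a i < 0)
    (hs : Summable fun i ↦ |c i| / -a i) :
    ∫ t in Ioi 0, |∑' i, c i * exp (a i * t)| ≤ ∑' i, |c i| / -a i := by
  have h := integral_norm_tsum_le_of_summable_integral_norm
    (fun i ↦ (integrableOn_exp_mul_Ioi (ha i) 0).const_mul (c i))
    (by simpa only [integral_norm_mul_exp_mul_Ioi _ (ha _)] using hs)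
  simp only [integral_norm_mul_exp_mul_Ioi _ (ha _)] at h
  simpa only [Real.norm_eq_abs] using h

end ExponentialSeries

theorem hasSum_one_div_succ_sq_mul_pi_sq :
    HasSum (fun n : ℕ ↦ 1 / (((n : ℝ) + 1) ^ 2 * π ^ 2)) (1 / 6) := by
  have h := ((hasSum_nat_add_iff' 1).mpr hasSum_zeta_two).div_const (π ^ 2)
  simp only [Finset.range_one, Finset.sum_singleton, Nat.cast_zero, Nat.cast_add, Nat.cast_one,
    div_div, zero_pow two_ne_zero, div_zero, sub_zero] at h
  rwa [div_mul_cancel_right₀ (by positivity), ← one_div] at h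

theorem abs_le_iSup_abs_of_continuousOn {X : Type*} [TopologicalSpace X] {s : Set X}
    {f : X → ℝ} (hs : IsCompact s) (hf : ContinuousOn f s) {y : X} (hy : y ∈ s) :
    |f y| ≤ ⨆ z : s, |f z| := by
  refine le_ciSup (f := fun z : s ↦ |f z|) ?_ ⟨y, hy⟩
  simpa only [image_eq_range] using hs.bddAbove_image hf.abs

theorem abs_integral_mul_sin_le {f : ℝ → ℝ} {M : ℝ} (hM : ∀ y ∈ Icc (0 : ℝ) 1, |f y| ≤ M)
    (ω : ℝ) : |∫ y in (0 : ℝ)..1, f y * sin (ω * y)| ≤ M := by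
  simpa using intervalIntegral.norm_integral_le_of_norm_le_const (C := M) (a := 0) (b := 1)
    (f := fun y ↦ f y * sin (ω * y)) fun y hy ↦ by
      rw [uIoc_of_le zero_le_one] at hy
      have hfy := hM y (Ioc_subset_Icc_self hy)
      rw [norm_mul, Real.norm_eq_abs, Real.norm_eq_abs]
      exact (mul_le_of_le_one_right (abs_nonneg _) (abs_sin_le_one _)).trans hfy

theorem integrableOn_heat_series_and_integral_abs_le {c : ℕ → ℝ} {M : ℝ}
    (hc : ∀ n, |c n| ≤ M) :
    IntegrableOn (fun t ↦ ∑' n : ℕ, c n * exp (-(((n : ℝ) + 1) ^ 2) * π ^ 2 * t)) (Ioi 0) ∧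
      ∫ t in Ioi 0, |∑' n : ℕ, c n * exp (-(((n : ℝ) + 1) ^ 2) * π ^ 2 * t)| ≤ M / 6 := by
  have ha : ∀ n : ℕ, -(((n : ℝ) + 1) ^ 2) * π ^ 2 < 0 := fun n ↦ by
    rw [neg_mul, neg_lt_zero]; positivity
  have hle : ∀ n : ℕ,
      |c n| / -(-(((n : ℝ) + 1) ^ 2) * π ^ 2) ≤ M * (1 / ((n + 1) ^ 2 * π ^ 2)) := fun n ↦ by
    rw [neg_mul, neg_neg, mul_one_div]
    exact div_le_div_of_nonneg_right (hc n) (by positivity)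
  have hB := hasSum_one_div_succ_sq_mul_pi_sq.mul_left M
  have hs := hB.summable.of_nonneg_of_le
    (fun n ↦ div_nonneg (abs_nonneg _) (neg_nonneg.2 (ha n).le)) hle
  refine ⟨integrableOn_tsum_mul_exp_mul_Ioi ha hs,
    (integral_abs_tsum_mul_exp_mul_Ioi_le ha hs).trans ?_⟩
  calc ∑' n : ℕ, |c n| / -(-(((n : ℝ) + 1) ^ 2) * π ^ 2)
      ≤ ∑' n : ℕ, M * (1 / ((n + 1) ^ 2 * π ^ 2)) := hs.tsum_le_tsum hle hB.summable
    _ = M / 6 := by rw [hB.tsum_eq, mul_one_div]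

theorem u1_integrable_and_bound_general
    (f : ℝ → ℝ) (hf : ContinuousOn f (Set.Icc 0 1))
    (x : ℝ) :
    IntegrableOn (fun t : ℝ => u1 f x t) (Set.Ici 0) ∧
      ∫ t in Set.Ici (0 : ℝ), |u1 f x t| ≤ (⨆ y : Set.Icc (0 : ℝ) 1, |f y|) / 3 := by
  set M := ⨆ y : Set.Icc (0 : ℝ) 1, |f y|
  have hfM : ∀ y ∈ Icc (0 : ℝ) 1, |f y| ≤ M := fun y hy ↦
    abs_le_iSup_abs_of_continuousOn isCompact_Icc hf hy
  set c : ℕ → ℝ := fun n ↦ (∫ y in (0 : ℝ)..1, f y * sin (((n : ℝ) + 1) * π * y)) *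
    sin (((n : ℝ) + 1) * π * x)
  have hc : ∀ n, |c n| ≤ M := fun n ↦ by
    rw [abs_mul]
    exact (mul_le_of_le_one_right (abs_nonneg _) (abs_sin_le_one _)).trans
      (abs_integral_mul_sin_le hfM _)
  have hu : ∀ t, u1 f x t = 2 * ∑' n : ℕ, c n * exp (-(((n : ℝ) + 1) ^ 2) * π ^ 2 * t) :=
    fun t ↦ congrArg (2 * ·) (tsum_congr fun n ↦ mul_right_comm _ _ _)
  obtain ⟨h_int, h_le⟩ := integrableOn_heat_series_and_integral_abs_le hc
  simp only [hu]
  refine ⟨(integrableOn_Ici_iff_integrableOn_Ioi).mpr (h_int.const_mul 2), ?_⟩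
  simp only [integral_Ici_eq_integral_Ioi, abs_mul, abs_two, integral_const_mul]
  linarith

/-- If `f : [0,1] → ℝ` is continuous, then for every `x ∈ [0,1]`
the function `t ↦ u1 f x t` is Lebesgue integrable on `[0,∞)` and
`∫_0^∞ |u1 f x t| dt ≤ ‖f‖_∞ / 3`, where `‖f‖_∞ = sup_{y ∈ [0,1]} |f y|`. -/
theorem u1_integrable_and_bound
    (f : ℝ → ℝ) (hf : ContinuousOn f (Set.Icc 0 1))
    (x : ℝ) (hx : x ∈ Set.Icc (0 : ℝ) 1) :
    IntegrableOn (fun t : ℝ => u1 f x t) (Set.Ici 0) ∧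
      ∫ t in Set.Ici (0 : ℝ), |u1 f x t| ≤ (⨆ y : Set.Icc (0 : ℝ) 1, |f y|) / 3 :=
  u1_integrable_and_bound_general f hf x
end

section
/- Let m > 0 be a real number and let f : [0,1] → ℝ be continuous. Define v(x) = ∫_0^1 g(m,x,y)·f(y) dy for x ∈ [0,1]. Then v is twice continuously differentiable on [0,1], v(0) = v(1) = 0, and −v''(x) + m²·v(x) = f(x) for all x ∈ [0,1]; moreover v is the unique function with these properties. -/
open MeasureTheory Set

/-- The Green's function `g(m,x,y)` of the problem `−v'' + m² v = f`, `v(0)=v(1)=0`,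
for `m > 0`. -/
noncomputable def gR (m x y : ℝ) : ℝ :=
  if y ≤ x then
    -(Real.sinh (m * (x - 1)) * Real.sinh (m * y)) / (m * Real.sinh m)
  else
    -(Real.sinh (m * x) * Real.sinh (m * (y - 1))) / (m * Real.sinh m)

/-- `v : [0,1] → ℝ` is a solution of the Dirichlet BVP `−v'' + m² v = f` on `[0,1]`,
`v 0 = v 1 = 0`, being twice continuously differentiable on `[0,1]`. -/
def IsSolBVP (m : ℝ) (f v : ℝ → ℝ) : Prop :=
  ∃ v' v'' : ℝ → ℝ,
    (∀ x ∈ Set.Icc (0 : ℝ) 1, HasDerivWithinAt v (v' x) (Set.Icc 0 1) x) ∧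
    (∀ x ∈ Set.Icc (0 : ℝ) 1, HasDerivWithinAt v' (v'' x) (Set.Icc 0 1) x) ∧
    ContinuousOn v' (Set.Icc 0 1) ∧
    ContinuousOn v'' (Set.Icc 0 1) ∧
    v 0 = 0 ∧ v 1 = 0 ∧
    (∀ x ∈ Set.Icc (0 : ℝ) 1, -v'' x + m ^ 2 * v x = f x)

/-!
Splitting the integral at `y = x` gives
`v x = -(sinh (m (x-1)) A x + sinh (m x) B x) / (m sinh m)` with `A x = ∫₀ˣ sinh (m y) f y` and
`B x = ∫ₓ¹ sinh (m (y-1)) f y`. Differentiating, the terms in `f` cancel in `v'`, and in `v''`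
they combine to `-f` through `sinh (m x) cosh (m (x-1)) - cosh (m x) sinh (m (x-1)) = sinh m`.
To use the fundamental theorem of calculus at every point, `f` is first extended continuously
from `[0,1]` to `ℝ`.

For uniqueness, the difference `u` of two solutions satisfies `u'' = m² u`, so its Wronskian with
each solution `sinh (m (x - c))` is constant; taking `c` at the two endpoints, where `u`
vanishes, and eliminating `u'` gives `m sinh (m (b-a)) u x = 0`.
-/

open Real intervalIntegral

theorem Convex.eq_of_hasDerivWithinAt_zero {s : Set ℝ} (hs : Convex ℝ s) {g : ℝ → ℝ}
    (hg : ∀ x ∈ s, HasDerivWithinAt g 0 s x) {x y : ℝ} (hx : x ∈ s) (hy : y ∈ s) :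
    g x = g y := by
  have := hs.norm_image_sub_le_of_norm_hasDerivWithin_le hg (fun _ _ => norm_zero.le) hy hx
  simpa [sub_eq_zero] using this

section SinhCosh

variable {m : ℝ}

theorem hasDerivAt_sinh_mul_sub (c x : ℝ) :
    HasDerivAt (fun x => sinh (m * (x - c))) (m * cosh (m * (x - c))) x :=
  (((hasDerivAt_id' x).sub_const c).const_mul m).sinh.congr_deriv (by ring)

theorem hasDerivAt_cosh_mul_sub (c x : ℝ) :
    HasDerivAt (fun x => cosh (m * (x - c))) (m * sinh (m * (x - c))) x :=
  (((hasDerivAt_id' x).sub_const c).const_mul m).cosh.congr_deriv (by ring)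

theorem sinh_mul_cosh_sub_cosh_mul_sinh_eq (a b x : ℝ) :
    sinh (m * (x - a)) * cosh (m * (x - b)) - cosh (m * (x - a)) * sinh (m * (x - b))
      = sinh (m * (b - a)) := by
  rw [← sinh_sub]; ring_nf

end SinhCosh

section Homogeneous

variable {a b m : ℝ} {u u' : ℝ → ℝ}

theorem wronskian_sinh_eq (hu : ∀ x ∈ Icc a b, HasDerivWithinAt u (u' x) (Icc a b) x)
    (hu' : ∀ x ∈ Icc a b, HasDerivWithinAt u' (m ^ 2 * u x) (Icc a b) x) {c x : ℝ}
    (hc : c ∈ Icc a b) (hx : x ∈ Icc a b) :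
    u' x * sinh (m * (x - c)) - m * u x * cosh (m * (x - c)) = -(m * u c) := by
  have hW : ∀ y ∈ Icc a b, HasDerivWithinAt
      (fun y => u' y * sinh (m * (y - c)) - m * u y * cosh (m * (y - c))) 0 (Icc a b) y := by
    intro y hy
    exact (((hu' y hy).mul (hasDerivAt_sinh_mul_sub c y).hasDerivWithinAt).sub
      (((hu y hy).const_mul m).mul (hasDerivAt_cosh_mul_sub c y).hasDerivWithinAt)).congr_deriv
      (by ring)
  simpa using (convex_Icc a b).eq_of_hasDerivWithinAt_zero hW hx hc

theorem eqOn_zero_of_hasDerivWithinAt_of_eq_zero (hm : m ≠ 0) (hab : a < b)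
    (hu : ∀ x ∈ Icc a b, HasDerivWithinAt u (u' x) (Icc a b) x)
    (hu' : ∀ x ∈ Icc a b, HasDerivWithinAt u' (m ^ 2 * u x) (Icc a b) x)
    (ha : u a = 0) (hb : u b = 0) : EqOn u 0 (Icc a b) := by
  intro x hx
  have hWa := wronskian_sinh_eq hu hu' (left_mem_Icc.2 hab.le) hx
  have hWb := wronskian_sinh_eq hu hu' (right_mem_Icc.2 hab.le) hx
  have hsinh := sinh_mul_cosh_sub_cosh_mul_sinh_eq (m := m) a b x
  have hprod : m * sinh (m * (b - a)) * u x = 0 := by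
    rw [ha] at hWa
    rw [hb] at hWb
    linear_combination sinh (m * (x - b)) * hWa - sinh (m * (x - a)) * hWb - m * u x * hsinh
  have hsinh_ne : sinh (m * (b - a)) ≠ 0 :=
    sinh_ne_zero.2 (mul_ne_zero hm (sub_ne_zero.2 hab.ne'))
  simpa [hm, hsinh_ne] using hprod

end Homogeneous

section BVP

variable {m : ℝ} {f g v w w₁ w₂ : ℝ → ℝ}

theorem IsSolBVP.congr (h : IsSolBVP m f v) (hv : EqOn v w (Icc 0 1)) (hf : EqOn f g (Icc 0 1)) :
    IsSolBVP m g w := by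
  obtain ⟨v', v'', hv', hv'', hc', hc'', h0, h1, heq⟩ := h
  refine ⟨v', v'', fun x hx => (hv' x hx).congr (fun y hy => (hv hy).symm) (hv hx).symm,
    hv'', hc', hc'', ?_, ?_, fun x hx => ?_⟩
  · rw [← hv (left_mem_Icc.2 zero_le_one), h0]
  · rw [← hv (right_mem_Icc.2 zero_le_one), h1]
  · rw [← hv hx, ← hf hx, heq x hx]

theorem IsSolBVP.eqOn (hm : m ≠ 0) (h₁ : IsSolBVP m f w₁) (h₂ : IsSolBVP m f w₂) :
    EqOn w₁ w₂ (Icc 0 1) := by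
  obtain ⟨p', p'', hp', hp'', -, -, hp0, hp1, hpf⟩ := h₁
  obtain ⟨q', q'', hq', hq'', -, -, hq0, hq1, hqf⟩ := h₂
  have hu'' : ∀ x ∈ Icc (0 : ℝ) 1,
      HasDerivWithinAt (p' - q') (m ^ 2 * (w₁ - w₂) x) (Icc 0 1) x := fun x hx =>
    ((hp'' x hx).sub (hq'' x hx)).congr_deriv <| by
      simp only [Pi.sub_apply]; linear_combination hqf x hx - hpf x hx
  have hu := eqOn_zero_of_hasDerivWithinAt_of_eq_zero (u' := p' - q') hm zero_lt_one
    (fun x hx => (hp' x hx).sub (hq' x hx)) hu'' (by simp [hp0, hq0]) (by simp [hp1, hq1])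
  exact fun x hx => sub_eq_zero.1 (hu hx)

end BVP

theorem Continuous.hasDerivAt_integral_left {h : ℝ → ℝ} (hh : Continuous h) (b x : ℝ) :
    HasDerivAt (fun u => ∫ y in u..b, h y) (-h x) x := by
  simp only [integral_symm b]
  exact (hh.integral_hasStrictDerivAt b x).hasDerivAt.neg

section Green

variable (m : ℝ) (F : ℝ → ℝ)

noncomputable def greenSolution (x : ℝ) : ℝ :=
  -(sinh (m * (x - 1)) * (∫ y in 0..x, sinh (m * y) * F y)
    + sinh (m * x) * ∫ y in x..1, sinh (m * (y - 1)) * F y) / (m * sinh m)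

noncomputable def greenSolutionDeriv (x : ℝ) : ℝ :=
  -(m * cosh (m * (x - 1)) * (∫ y in 0..x, sinh (m * y) * F y)
    + m * cosh (m * x) * ∫ y in x..1, sinh (m * (y - 1)) * F y) / (m * sinh m)

variable {m F}

theorem greenSolution_zero : greenSolution m F 0 = 0 := by
  simp [greenSolution]

theorem greenSolution_one : greenSolution m F 1 = 0 := by
  simp [greenSolution]

theorem hasDerivAt_greenSolution (hF : Continuous F) (x : ℝ) :
    HasDerivAt (greenSolution m F) (greenSolutionDeriv m F x) x := by
  have hA := (show Continuous fun y => sinh (m * y) * F y by fun_prop).integral_hasStrictDerivAt 0 x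
  have hB := (show Continuous fun y => sinh (m * (y - 1)) * F y by fun_prop).hasDerivAt_integral_left 1 x
  have hS0 := hasDerivAt_sinh_mul_sub (m := m) 0 x
  simp only [sub_zero] at hS0
  refine ((((hasDerivAt_sinh_mul_sub 1 x).mul hA.hasDerivAt).add (hS0.mul hB)).neg.div_const
    (m * sinh m)).congr_deriv ?_
  simp only [greenSolutionDeriv]
  ring

theorem hasDerivAt_greenSolutionDeriv (hm : m ≠ 0) (hF : Continuous F) (x : ℝ) :
    HasDerivAt (greenSolutionDeriv m F) (m ^ 2 * greenSolution m F x - F x) x := by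
  have hA := (show Continuous fun y => sinh (m * y) * F y by fun_prop).integral_hasStrictDerivAt 0 x
  have hB := (show Continuous fun y => sinh (m * (y - 1)) * F y by fun_prop).hasDerivAt_integral_left 1 x
  have hC0 := hasDerivAt_cosh_mul_sub (m := m) 0 x
  simp only [sub_zero] at hC0
  refine ((((hasDerivAt_cosh_mul_sub 1 x).const_mul m).mul hA.hasDerivAt).add
    ((hC0.const_mul m).mul hB)).neg.div_const (m * sinh m) |>.congr_deriv ?_
  have hsinh := sinh_mul_cosh_sub_cosh_mul_sinh_eq (m := m) 0 1 x
  simp only [sub_zero, mul_one] at hsinh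
  have hsinh_ne : sinh m ≠ 0 := sinh_ne_zero.2 hm
  simp only [greenSolution]
  field_simp
  linear_combination (-F x) * hsinh

theorem isSolBVP_greenSolution (hm : m ≠ 0) (hF : Continuous F) :
    IsSolBVP m F (greenSolution m F) := by
  have hv : Continuous (greenSolution m F) :=
    continuous_iff_continuousAt.2 fun x => (hasDerivAt_greenSolution hF x).continuousAt
  have hv' : Continuous (greenSolutionDeriv m F) :=
    continuous_iff_continuousAt.2 fun x => (hasDerivAt_greenSolutionDeriv hm hF x).continuousAt
  refine ⟨greenSolutionDeriv m F, fun x => m ^ 2 * greenSolution m F x - F x,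
    fun x _ => (hasDerivAt_greenSolution hF x).hasDerivWithinAt,
    fun x _ => (hasDerivAt_greenSolutionDeriv hm hF x).hasDerivWithinAt,
    hv'.continuousOn, (by fun_prop : Continuous _).continuousOn,
    greenSolution_zero, greenSolution_one, fun x _ => by ring⟩

theorem integral_gR_mul_eq_greenSolution (hF : Continuous F) {x : ℝ} (hx : x ∈ Icc (0 : ℝ) 1) :
    ∫ y in (0 : ℝ)..1, gR m x y * F y = greenSolution m F x := by
  have h₁ : EqOn (fun y => gR m x y * F y)
      (fun y => -sinh (m * (x - 1)) / (m * sinh m) * (sinh (m * y) * F y)) (uIcc 0 x) := by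
    intro y hy
    rw [uIcc_of_le hx.1] at hy
    simp only [gR, if_pos hy.2]
    ring
  have h₂ : EqOn (fun y => gR m x y * F y)
      (fun y => -sinh (m * x) / (m * sinh m) * (sinh (m * (y - 1)) * F y)) (uIcc x 1) := by
    intro y hy
    rw [uIcc_of_le hx.2] at hy
    simp only [gR]
    split_ifs with hyx
    · obtain rfl := le_antisymm hyx hy.1
      ring
    · ring
  have hi₁ := ((by fun_prop : Continuous _).continuousOn.congr h₁).intervalIntegrable (μ := volume)
  have hi₂ := ((by fun_prop : Continuous _).continuousOn.congr h₂).intervalIntegrable (μ := volume)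
  rw [← integral_add_adjacent_intervals hi₁ hi₂, integral_congr h₁, integral_congr h₂,
    intervalIntegral.integral_const_mul, intervalIntegral.integral_const_mul, greenSolution]
  ring

end Green

/-- For `m > 0` and continuous `f : [0,1] → ℝ`, the function
`v x = ∫_0^1 g(m,x,y) f(y) dy` is twice continuously differentiable on `[0,1]`,
satisfies `v 0 = v 1 = 0` and `−v'' + m² v = f` on `[0,1]`, and is the unique such
function. -/
theorem green_function_solves_bvp
    (m : ℝ) (hm : 0 < m)
    (f : ℝ → ℝ) (hf : ContinuousOn f (Set.Icc 0 1)) :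
    IsSolBVP m f (fun x => ∫ y in (0:ℝ)..1, gR m x y * f y) ∧
      ∀ w : ℝ → ℝ, IsSolBVP m f w →
        ∀ x ∈ Set.Icc (0 : ℝ) 1, w x = ∫ y in (0:ℝ)..1, gR m x y * f y := by
  obtain ⟨F, hF, hFf⟩ : ∃ F : ℝ → ℝ, Continuous F ∧ EqOn F f (Icc 0 1) :=
    ⟨IccExtend zero_le_one ((Icc 0 1).domRestrict f), continuous_IccExtend_iff.2 hf.domRestrict,
      fun x hx => IccExtend_of_mem _ _ hx⟩
  have hv : EqOn (greenSolution m F) (fun x => ∫ y in (0:ℝ)..1, gR m x y * f y) (Icc 0 1) :=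
    fun x hx => by
      rw [← integral_gR_mul_eq_greenSolution hF hx]
      refine integral_congr fun y hy => ?_
      rw [uIcc_of_le zero_le_one] at hy
      rw [hFf hy]
  have hsol := (isSolBVP_greenSolution hm.ne' hF).congr hv hFf
  exact ⟨hsol, fun w hw x hx => hw.eqOn hm.ne' hsol hx⟩
end

section
/- Define F(x,t) = (8π²·t + 1)·sin(2πx)/(2√t) for x ∈ [0,1] and t > 0, and define u(x,t) = √t·sin(2πx) for x ∈ [0,1] and t ≥ 0. Then u is continuous on [0,1]×[0,∞), u(x,0) = 0 for all x ∈ [0,1], u(0,t) = u(1,t) = 0 for all t ≥ 0, and for every t > 0 and x ∈ (0,1), ∂u/∂t(x,t) − ∂²u/∂x²(x,t) = F(x,t). (This gives an unbounded, t=0-discontinuous forcing term F whose corresponding solution of the Dirichlet heat problem is the unbounded function u.) -/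
open scoped Real

/-!
`x ↦ sin (2πx)` is an eigenfunction of `∂²/∂x²` with eigenvalue `-4π²` vanishing at `0` and `1`,
so for `u = √t · sin (2πx)` the heat operator gives `(1/(2√t) + 4π²√t) sin (2πx)`, which is
`F` after putting everything over `2√t` (using `√t · √t = t`).
-/

namespace Real

theorem hasDerivAt_const_mul_sin_mul (c a x : ℝ) :
    HasDerivAt (fun y => c * sin (a * y)) (c * (a * cos (a * x))) x := by
  have := ((hasDerivAt_sin (a * x)).comp x ((hasDerivAt_id x).const_mul a)).const_mul c
  simpa [mul_comm (cos _)] using this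

theorem hasDerivAt_const_mul_cos_mul (c a x : ℝ) :
    HasDerivAt (fun y => c * cos (a * y)) (-(c * (a * sin (a * x)))) x := by
  have := ((hasDerivAt_cos (a * x)).comp x ((hasDerivAt_id x).const_mul a)).const_mul c
  simpa [mul_comm (sin _)] using this

theorem deriv_deriv_const_mul_sin_mul (c a x : ℝ) :
    deriv (deriv fun y => c * sin (a * y)) x = -a ^ 2 * (c * sin (a * x)) := by
  have hderiv : deriv (fun y => c * sin (a * y)) = fun y => c * a * cos (a * y) := by
    funext y
    rw [(hasDerivAt_const_mul_sin_mul c a y).deriv, mul_assoc]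
  rw [hderiv, (hasDerivAt_const_mul_cos_mul (c * a) a x).deriv]
  ring

theorem deriv_sqrt_mul_const {t : ℝ} (ht : t ≠ 0) (c : ℝ) :
    deriv (fun τ => √τ * c) t = c / (2 * √t) := by
  rw [((hasDerivAt_sqrt ht).mul_const c).deriv]
  ring

end Real

/-- With `F(x,t) = (8π²t + 1) sin(2πx)/(2√t)` (for `t > 0`) and
`u(x,t) = √t · sin(2πx)`: `u` is continuous on `[0,1] × [0,∞)`, `u(x,0) = 0`,
`u(0,t) = u(1,t) = 0`, and for every `t > 0` and `x ∈ (0,1)`,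
`∂u/∂t (x,t) − ∂²u/∂x² (x,t) = F(x,t)`.
This exhibits an unbounded forcing term, discontinuous at `t = 0`, whose
corresponding solution of the Dirichlet heat problem is the unbounded function `u`. -/
theorem unbounded_example_heat_equation :
    let F : ℝ → ℝ → ℝ := fun x t => (8 * π ^ 2 * t + 1) * Real.sin (2 * π * x) / (2 * Real.sqrt t)
    let u : ℝ → ℝ → ℝ := fun x t => Real.sqrt t * Real.sin (2 * π * x)
    ContinuousOn (fun p : ℝ × ℝ => u p.1 p.2) (Set.Icc 0 1 ×ˢ Set.Ici 0) ∧
    (∀ x ∈ Set.Icc (0 : ℝ) 1, u x 0 = 0) ∧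
    (∀ t ≥ (0 : ℝ), u 0 t = 0 ∧ u 1 t = 0) ∧
    (∀ t > (0 : ℝ), ∀ x ∈ Set.Ioo (0 : ℝ) 1,
      deriv (fun τ => u x τ) t - deriv (deriv (fun ξ => u ξ t)) x = F x t) := by
  intro F u
  refine ⟨by fun_prop, fun x _ => by simp [u], fun t _ => by simp [u], ?_⟩
  intro t ht x _
  simp only [u, F]
  rw [Real.deriv_sqrt_mul_const ht.ne', Real.deriv_deriv_const_mul_sin_mul]
  field_simp
  linear_combination 8 * π ^ 2 * Real.sin (2 * π * x) * Real.mul_self_sqrt ht.le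
end

section
/- Let f : [0,1] → ℝ be twice continuously differentiable with f(0) = f(1) = 0 and f''(0) = f''(1) = 0. Then the series defining u1 converges for every (x,t) ∈ [0,1]×[0,∞), u1 is continuous and bounded on [0,1]×[0,∞), u1(x,0) = f(x) for all x ∈ [0,1], u1(0,t) = u1(1,t) = 0 for all t ≥ 0, and for every t > 0 and x ∈ (0,1) the partial derivatives ∂u1/∂t and ∂²u1/∂x² exist and satisfy ∂u1/∂t(x,t) = ∂²u1/∂x²(x,t). -/
open MeasureTheory Set Filter
open scoped Real Topology

section HeatAux

open intervalIntegral AddCircle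

lemma heatAux_coeff_bound (f : ℝ → ℝ) (hf : ContDiffOn ℝ 2 f (Set.Icc 0 1))
    (hf0 : f 0 = 0) (hf1 : f 1 = 0) :
    ∃ C : ℝ, 0 ≤ C ∧ ∀ n : ℕ,
      |∫ y in (0:ℝ)..1, f y * Real.sin (((n : ℝ) + 1) * π * y)| ≤ C / ((n : ℝ) + 1) ^ 2 := by
  have hUD : UniqueDiffOn ℝ (Set.Icc (0:ℝ) 1) := uniqueDiffOn_Icc one_pos
  set f' := derivWithin f (Set.Icc (0:ℝ) 1) with hf'def
  set f'' := derivWithin f' (Set.Icc (0:ℝ) 1) with hf''def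
  have hcont : ContinuousOn f (Set.Icc (0:ℝ) 1) := hf.continuousOn
  have hf'cd : ContDiffOn ℝ 1 f' (Set.Icc (0:ℝ) 1) :=
    hf.derivWithin hUD (by norm_num)
  have hf'cont : ContinuousOn f' (Set.Icc (0:ℝ) 1) := hf'cd.continuousOn
  have hf''cont : ContinuousOn f'' (Set.Icc (0:ℝ) 1) :=
    (hf'cd.derivWithin (m := 0) hUD (by norm_num)).continuousOn
  have hder : ∀ y ∈ Set.Ioo (0:ℝ) 1, HasDerivAt f (f' y) y := by
    intro y hy
    have hmem : Set.Icc (0:ℝ) 1 ∈ 𝓝 y := Icc_mem_nhds hy.1 hy.2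
    exact (((hf.differentiableOn (by norm_num)) y (Set.Ioo_subset_Icc_self hy)
      ).hasDerivWithinAt).hasDerivAt hmem
  have hder' : ∀ y ∈ Set.Ioo (0:ℝ) 1, HasDerivAt f' (f'' y) y := by
    intro y hy
    have hmem : Set.Icc (0:ℝ) 1 ∈ 𝓝 y := Icc_mem_nhds hy.1 hy.2
    exact (((hf'cd.differentiableOn (by norm_num)) y (Set.Ioo_subset_Icc_self hy)
      ).hasDerivWithinAt).hasDerivAt hmem
  obtain ⟨M, hM⟩ := isCompact_Icc.exists_bound_of_continuousOn hf''cont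
  have hM0 : 0 ≤ M := le_trans (norm_nonneg _) (hM 0 ⟨le_refl 0, zero_le_one⟩)
  refine ⟨M / π ^ 2, by positivity, fun n => ?_⟩
  set k : ℝ := ((n : ℝ) + 1) * π with hk
  have hn1 : (0:ℝ) < (n:ℝ) + 1 := by positivity
  have hkpos : 0 < k := by positivity
  have hsin : Real.sin k = 0 := by
    have : k = ((n + 1 : ℕ) : ℝ) * π := by push_cast [hk]; ring
    rw [this, Real.sin_nat_mul_pi]
  have hcos := fun y : ℝ => ((Real.hasDerivAt_cos (k * y)).comp y
    ((hasDerivAt_id y).const_mul k))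
  have hsinD := fun y : ℝ => ((Real.hasDerivAt_sin (k * y)).comp y
    ((hasDerivAt_id y).const_mul k))
  -- interval integrability helpers
  have hIcc : Set.uIcc (0:ℝ) 1 = Set.Icc 0 1 := Set.uIcc_of_le zero_le_one
  have hint1 : IntervalIntegrable (fun y => f y * Real.sin (k * y)) volume 0 1 := by
    apply ContinuousOn.intervalIntegrable; rw [hIcc]
    exact hcont.mul (Real.continuous_sin.comp (continuous_const.mul continuous_id)).continuousOn
  have hint2 : IntervalIntegrable (fun y => f' y * Real.cos (k * y)) volume 0 1 := by
    apply ContinuousOn.intervalIntegrable; rw [hIcc]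
    exact hf'cont.mul (Real.continuous_cos.comp (continuous_const.mul continuous_id)).continuousOn
  have hint3 : IntervalIntegrable (fun y => f'' y * Real.sin (k * y)) volume 0 1 := by
    apply ContinuousOn.intervalIntegrable; rw [hIcc]
    exact hf''cont.mul (Real.continuous_sin.comp (continuous_const.mul continuous_id)).continuousOn
  set I1 : ℝ := ∫ y in (0:ℝ)..1, f y * Real.sin (k * y) with hI1
  set I2 : ℝ := ∫ y in (0:ℝ)..1, f' y * Real.cos (k * y) with hI2
  set I3 : ℝ := ∫ y in (0:ℝ)..1, f'' y * Real.sin (k * y) with hI3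
  -- first integration by parts
  have step1 : I2 - k * I1 = 0 := by
    have hFTC := integral_eq_sub_of_hasDeriv_right_of_le
      (f := fun y => f y * Real.cos (k * y))
      (f' := fun y => f' y * Real.cos (k * y) - k * (f y * Real.sin (k * y)))
      zero_le_one
      (hcont.mul
          (Real.continuous_cos.comp (continuous_const.mul continuous_id)).continuousOn)
      (fun y hy => by
        have h := (hder y hy).mul (hcos y)
        have heq : f' y * Real.cos (k * y) + f y * (-Real.sin (k * y) * (k * 1)) =
            f' y * Real.cos (k * y) - k * (f y * Real.sin (k * y)) := by ring
        exact (heq ▸ h).hasDerivWithinAt)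
      (hint2.sub (hint1.const_mul k))
    rw [intervalIntegral.integral_sub hint2 (hint1.const_mul k),
      intervalIntegral.integral_const_mul] at hFTC
    rw [← hI1, ← hI2] at hFTC
    rw [hFTC]; simp [hf0, hf1]
  have step2 : I3 + k * I2 = 0 := by
    have hFTC := integral_eq_sub_of_hasDeriv_right_of_le
      (f := fun y => f' y * Real.sin (k * y))
      (f' := fun y => f'' y * Real.sin (k * y) + k * (f' y * Real.cos (k * y)))
      zero_le_one
      (hf'cont.mul
          (Real.continuous_sin.comp (continuous_const.mul continuous_id)).continuousOn)
      (fun y hy => by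
        have h := (hder' y hy).mul (hsinD y)
        have heq : f'' y * Real.sin (k * y) + f' y * (Real.cos (k * y) * (k * 1)) =
            f'' y * Real.sin (k * y) + k * (f' y * Real.cos (k * y)) := by ring
        exact (heq ▸ h).hasDerivWithinAt)
      (hint3.add (hint2.const_mul k))
    rw [intervalIntegral.integral_add hint3 (hint2.const_mul k),
      intervalIntegral.integral_const_mul] at hFTC
    rw [← hI2, ← hI3] at hFTC
    rw [hFTC]; simp [hsin]
  have hI3bd : |I3| ≤ M := by
    have := intervalIntegral.norm_integral_le_of_norm_le_const
      (C := M) (f := fun y => f'' y * Real.sin (k * y)) (a := (0:ℝ)) (b := 1)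
      (fun y hy => by
        rw [Set.uIoc_of_le zero_le_one] at hy
        have h1 : ‖f'' y‖ ≤ M := hM y (Set.Ioc_subset_Icc_self hy)
        calc ‖f'' y * Real.sin (k * y)‖ = ‖f'' y‖ * |Real.sin (k * y)|:= by
              rw [norm_mul]; rfl
          _ ≤ M * 1 := mul_le_mul h1 (abs_le.mpr ⟨Real.neg_one_le_sin _, Real.sin_le_one _⟩) (abs_nonneg _) hM0
          _ = M := mul_one M)
    simpa using this
  have hI1eq : I1 = -I3 / k ^ 2 := by
    have hk2 : k ^ 2 ≠ 0 := by positivity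
    field_simp
    nlinarith [step1, step2]
  rw [hI1eq]
  rw [abs_div, abs_neg, abs_of_pos (by positivity : (0:ℝ) < k ^ 2)]
  rw [div_le_div_iff₀ (by positivity) (by positivity)]
  have hk2 : k ^ 2 = ((n:ℝ) + 1) ^ 2 * π ^ 2 := by rw [hk]; ring
  calc |I3| * ((n:ℝ) + 1) ^ 2 ≤ M * ((n:ℝ)+1)^2 := by nlinarith [sq_nonneg ((n:ℝ)+1)]
    _ = M / π ^ 2 * k ^ 2 := by rw [hk2]; field_simp

lemma heatAux_summable_inv_sq : Summable (fun n : ℕ => 1 / ((n : ℝ) + 1) ^ 2) := by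
  have h0 := Real.summable_one_div_nat_pow.mpr (le_refl 2)
  have h := (summable_nat_add_iff (f := fun n : ℕ => 1 / (n:ℝ) ^ 2) 1).2 h0
  exact h.congr fun n => by push_cast; ring

lemma heatAux_summable_exp (a : ℝ) (ha : 0 < a) (p : ℕ) :
    Summable (fun n : ℕ => ((n : ℝ) + 1) ^ p * Real.exp (-((n : ℝ) + 1) ^ 2 * a)) := by
  have hr : ‖Real.exp (-a)‖ < 1 := by
    rw [Real.norm_eq_abs, abs_of_pos (Real.exp_pos _)]
    exact Real.exp_lt_one_iff.mpr (by linarith)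
  have h0 := summable_pow_mul_geometric_of_norm_lt_one p hr
  have h1 : Summable (fun n : ℕ => ((n:ℝ)+1) ^ p * Real.exp (-a) ^ (n+1)) := by
    have := (summable_nat_add_iff (f := fun n : ℕ => (n:ℝ) ^ p * Real.exp (-a) ^ n) 1).2 h0
    refine this.congr fun n => ?_
    push_cast
    ring
  refine Summable.of_nonneg_of_le (fun n => by positivity) (fun n => ?_) h1
  have hexp : Real.exp (-((n : ℝ) + 1) ^ 2 * a) ≤ Real.exp (-a) ^ (n+1) := by
    rw [← Real.exp_nat_mul]
    apply Real.exp_le_exp.2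
    push_cast
    nlinarith [Nat.cast_nonneg (α := ℝ) n, mul_le_mul_of_nonneg_right (show ((n:ℝ)+1) ≤ ((n:ℝ)+1)^2 by nlinarith [Nat.cast_nonneg (α := ℝ) n]) ha.le]
  have hp : (0:ℝ) ≤ ((n:ℝ)+1)^p := by positivity
  exact mul_le_mul_of_nonneg_left hexp hp

section FourierInv

variable (f : ℝ → ℝ)

/-- odd extension -/
noncomputable def heatAuxF (y : ℝ) : ℝ := if 0 ≤ y then f y else -f (-y)

lemma heatAuxF_eq_on_right (y : ℝ) (hy : 0 ≤ y) : heatAuxF f y = f y := if_pos hy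

lemma heatAuxF_eq_on_left (hf0 : f 0 = 0) (y : ℝ) (hy : y ≤ 0) :
    heatAuxF f y = -f (-y) := by
  rcases lt_or_eq_of_le hy with h | h
  · exact if_neg (not_le.mpr h)
  · simp [heatAuxF, h, hf0]

lemma heatAuxF_continuousOn (hcont : ContinuousOn f (Icc 0 1)) (hf0 : f 0 = 0) :
    ContinuousOn (heatAuxF f) (Icc (-1 : ℝ) 1) := by
  apply ContinuousOn.if
  · intro a ha
    have h0 : a = 0 := by
      have := ha.2
      rw [show {a : ℝ | 0 ≤ a} = Ici 0 from rfl, frontier_Ici] at this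
      simpa using this
    simp [h0, hf0]
  · refine hcont.mono ?_
    intro y hy
    rw [show {a : ℝ | 0 ≤ a} = Ici 0 from rfl] at hy
    rw [closure_Ici] at hy
    exact ⟨hy.2, hy.1.2⟩
  · have : ContinuousOn (fun y : ℝ => -f (-y)) (Icc (-1 : ℝ) 0) := by
      apply ContinuousOn.neg
      apply hcont.comp continuous_neg.continuousOn
      intro y hy
      exact ⟨neg_nonneg.mpr hy.2, by have := hy.1; simp only [neg_le]; linarith⟩
    refine this.mono ?_
    intro y hy
    have h2 := hy.2
    rw [show {a : ℝ | ¬ 0 ≤ a} = Iio 0 by ext z; simp [not_le], closure_Iio] at h2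
    exact ⟨hy.1.1, h2⟩


lemma heatAuxF_int_left (hcont : ContinuousOn f (Icc 0 1)) (hf0 : f 0 = 0) (E : ℝ → ℂ)
    (hE : Continuous E) :
    IntervalIntegrable (fun x => E x * (heatAuxF f x : ℂ)) volume (-1) 0 := by
  apply ContinuousOn.intervalIntegrable
  rw [Set.uIcc_of_le (by norm_num : (-1:ℝ) ≤ 0)]
  refine hE.continuousOn.mul ?_
  exact Complex.continuous_ofReal.comp_continuousOn
    ((heatAuxF_continuousOn f hcont hf0).mono (Icc_subset_Icc le_rfl (by norm_num)))

lemma heatAuxF_int_right (hcont : ContinuousOn f (Icc 0 1)) (hf0 : f 0 = 0) (E : ℝ → ℂ)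
    (hE : Continuous E) :
    IntervalIntegrable (fun x => E x * (heatAuxF f x : ℂ)) volume 0 1 := by
  apply ContinuousOn.intervalIntegrable
  rw [Set.uIcc_of_le (by norm_num : (0:ℝ) ≤ 1)]
  refine hE.continuousOn.mul ?_
  exact Complex.continuous_ofReal.comp_continuousOn
    ((heatAuxF_continuousOn f hcont hf0).mono (Icc_subset_Icc (by norm_num) le_rfl))

noncomputable def heatAuxE (m : ℤ) (x : ℝ) : ℂ :=
  Complex.exp (2 * (π:ℂ) * Complex.I * (-m) * x / 2)

lemma heatAuxE_continuous (m : ℤ) : Continuous (heatAuxE m) := by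
  unfold heatAuxE
  apply Complex.continuous_exp.comp
  exact (continuous_const.mul Complex.continuous_ofReal).div_const 2

set_option maxHeartbeats 1000000 in
lemma heatAuxE_pt (m : ℤ) (c y : ℝ) :
    heatAuxE m y * (c : ℂ) - heatAuxE m (-y) * (c : ℂ)
      = -2 * Complex.I * ((c * Real.sin ((m:ℝ) * π * y) : ℝ) : ℂ) := by
  have hA : heatAuxE m y = Complex.exp (-(((m:ℝ) * π * y : ℝ) : ℂ) * Complex.I) := by
    unfold heatAuxE; congr 1; push_cast; ring
  have hB : heatAuxE m (-y) = Complex.exp ((((m:ℝ) * π * y : ℝ) : ℂ) * Complex.I) := by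
    unfold heatAuxE; congr 1; push_cast; ring
  have hR : ((c * Real.sin ((m:ℝ) * π * y) : ℝ) : ℂ)
      = (c : ℂ) * Complex.sin (((m:ℝ) * π * y : ℝ) : ℂ) := by
    push_cast
    ring
  rw [hA, hB, hR, Complex.sin]
  have hI := Complex.I_mul_I
  linear_combination ((c : ℂ) * (Complex.exp (-(((m:ℝ) * π * y : ℝ) : ℂ) * Complex.I)
    - Complex.exp ((((m:ℝ) * π * y : ℝ) : ℂ) * Complex.I))) * hI

/-- the key complex integral computation -/
lemma heatAux_key_integral (hcont : ContinuousOn f (Icc 0 1)) (hf0 : f 0 = 0) (m : ℤ) :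
    (∫ x in (-1:ℝ)..1, heatAuxE m x * (heatAuxF f x : ℂ))
      = -2 * Complex.I *
        ((∫ y in (0:ℝ)..1, f y * Real.sin ((m:ℝ) * π * y) : ℝ) : ℂ) := by
  set E : ℝ → ℂ := heatAuxE m with hEdef
  have hE : Continuous E := heatAuxE_continuous m
  have hfC : ContinuousOn (fun y => (f y : ℂ)) (Icc (0:ℝ) 1) :=
    Complex.continuous_ofReal.comp_continuousOn hcont
  -- split the integral
  have hsplit : (∫ x in (-1:ℝ)..1, E x * (heatAuxF f x : ℂ))
      = (∫ x in (-1:ℝ)..0, E x * (heatAuxF f x : ℂ))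
        + ∫ x in (0:ℝ)..1, E x * (heatAuxF f x : ℂ) :=
    (integral_add_adjacent_intervals (heatAuxF_int_left f hcont hf0 E hE)
      (heatAuxF_int_right f hcont hf0 E hE)).symm
  have hleft : (∫ x in (-1:ℝ)..0, E x * (heatAuxF f x : ℂ))
      = - ∫ y in (0:ℝ)..1, E (-y) * (f y : ℂ) := by
    have h1 : (∫ x in (-1:ℝ)..0, E x * (heatAuxF f x : ℂ))
        = ∫ x in (-1:ℝ)..0, -(E x * (f (-x) : ℂ)) := by
      apply intervalIntegral.integral_congr
      intro x hx
      rw [Set.uIcc_of_le (by norm_num : (-1:ℝ) ≤ 0)] at hx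
      simp only [heatAuxF_eq_on_left f hf0 x hx.2]
      push_cast
      ring
    rw [h1, intervalIntegral.integral_neg]
    congr 1
    have h2 := intervalIntegral.integral_comp_neg (a := (-1:ℝ)) (b := 0)
      (f := fun y => E (-y) * (f y : ℂ))
    simp only [neg_zero, neg_neg] at h2
    exact h2
  have hright : (∫ x in (0:ℝ)..1, E x * (heatAuxF f x : ℂ))
      = ∫ y in (0:ℝ)..1, E y * (f y : ℂ) := by
    apply intervalIntegral.integral_congr
    intro x hx
    rw [Set.uIcc_of_le (by norm_num : (0:ℝ) ≤ 1)] at hx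
    simp only [heatAuxF_eq_on_right f x hx.1]
  have hEi : IntervalIntegrable (fun y => E y * (f y : ℂ)) volume 0 1 := by
    apply ContinuousOn.intervalIntegrable
    rw [Set.uIcc_of_le (by norm_num : (0:ℝ) ≤ 1)]
    exact hE.continuousOn.mul hfC
  have hEi' : IntervalIntegrable (fun y => E (-y) * (f y : ℂ)) volume 0 1 := by
    apply ContinuousOn.intervalIntegrable
    rw [Set.uIcc_of_le (by norm_num : (0:ℝ) ≤ 1)]
    exact (hE.comp continuous_neg).continuousOn.mul hfC
  rw [hsplit, hleft, hright]
  rw [neg_add_eq_sub, ← intervalIntegral.integral_sub hEi hEi']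
  have hpt : ∀ y : ℝ, E y * (f y : ℂ) - E (-y) * (f y : ℂ)
      = -2 * Complex.I * ((f y * Real.sin ((m:ℝ) * π * y) : ℝ) : ℂ) :=
    fun y => heatAuxE_pt m (f y) y
  calc (∫ y in (0:ℝ)..1, (E y * (f y : ℂ) - E (-y) * (f y : ℂ)))
      = ∫ y in (0:ℝ)..1, -2 * Complex.I * ((f y * Real.sin ((m:ℝ) * π * y) : ℝ) : ℂ) := by
        apply intervalIntegral.integral_congr
        intro y _
        exact hpt y
    _ = -2 * Complex.I * ∫ y in (0:ℝ)..1, ((f y * Real.sin ((m:ℝ) * π * y) : ℝ) : ℂ) :=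
        intervalIntegral.integral_const_mul _ _
    _ = -2 * Complex.I * ((∫ y in (0:ℝ)..1, f y * Real.sin ((m:ℝ) * π * y) : ℝ) : ℂ) := by
        rw [intervalIntegral.integral_ofReal]


instance : Fact ((0:ℝ) < 2) := ⟨by norm_num⟩

noncomputable def heatAuxG : AddCircle (2:ℝ) → ℂ :=
  AddCircle.liftIco (2:ℝ) (-1 : ℝ) (fun y => (heatAuxF f y : ℂ))

lemma heatAuxG_continuous (hcont : ContinuousOn f (Icc 0 1)) (hf0 : f 0 = 0) (hf1 : f 1 = 0) :
    Continuous (heatAuxG f) := by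
  apply AddCircle.liftIco_continuous
  · show (heatAuxF f (-1) : ℂ) = (heatAuxF f (-1+2) : ℂ)
    rw [show (-1:ℝ)+2 = 1 by norm_num]
    rw [heatAuxF_eq_on_left f hf0 (-1) (by norm_num), heatAuxF_eq_on_right f 1 (by norm_num)]
    simp [hf1]
  · rw [show (-1:ℝ)+2 = 1 by norm_num]
    exact Complex.continuous_ofReal.comp_continuousOn (heatAuxF_continuousOn f hcont hf0)

lemma heatAuxG_coeff (hcont : ContinuousOn f (Icc 0 1)) (hf0 : f 0 = 0) (m : ℤ) :
    fourierCoeff (heatAuxG f) m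
      = -Complex.I * ((∫ y in (0:ℝ)..1, f y * Real.sin ((m:ℝ) * π * y) : ℝ) : ℂ) := by
  have e1 := fourierCoeff_liftIco_eq (T := 2) (a := -1) (fun y => (heatAuxF f y : ℂ)) m
  rw [fourierCoeffOn_eq_integral] at e1
  simp only [fourier_coe_apply] at e1
  norm_num at e1
  have e2 : ∀ x : ℝ, Complex.exp (-(2 * (π:ℂ) * Complex.I * (m:ℂ) * (x:ℂ)) / 2) = heatAuxE m x := by
    intro x; unfold heatAuxE; congr 1; ring
  simp only [e2] at e1
  unfold heatAuxG
  rw [e1, heatAux_key_integral f hcont hf0 m]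
  ring

set_option maxHeartbeats 1000000 in
lemma heatAuxE_pt2 (m : ℤ) (c y : ℝ) :
    (-Complex.I * (c:ℂ)) * Complex.exp (2 * (π:ℂ) * Complex.I * (m:ℂ) * (y:ℂ) / 2)
      + (Complex.I * (c:ℂ)) * Complex.exp (2 * (π:ℂ) * Complex.I * ((-m : ℤ):ℂ) * (y:ℂ) / 2)
      = ((2 * c * Real.sin ((m:ℝ) * π * y) : ℝ) : ℂ) := by
  have h := heatAuxE_pt m c y
  unfold heatAuxE at h
  have h2 : 2 * (π:ℂ) * Complex.I * (-(m:ℂ)) * ((-y:ℝ):ℂ) / 2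
      = 2 * (π:ℂ) * Complex.I * (m:ℂ) * (y:ℂ) / 2 := by push_cast; ring
  rw [h2] at h
  have hR : ((2 * c * Real.sin ((m:ℝ) * π * y) : ℝ) : ℂ)
      = 2 * ((c * Real.sin ((m:ℝ) * π * y) : ℝ) : ℂ) := by push_cast; ring
  rw [hR]
  have hcast : ((-m : ℤ):ℂ) = -(m:ℂ) := by push_cast; ring
  rw [hcast]
  linear_combination Complex.I * h
    + (-2 : ℂ) * ((c * Real.sin ((m:ℝ) * π * y) : ℝ) : ℂ) * Complex.I_mul_I


set_option maxHeartbeats 1000000 in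
lemma heatAux_fourier_inversion (hf2 : ContinuousOn f (Icc 0 1)) (hf0 : f 0 = 0) (hf1 : f 1 = 0)
    (C : ℝ)
    (hb : ∀ n : ℕ, |∫ y in (0:ℝ)..1, f y * Real.sin (((n:ℝ)+1) * π * y)| ≤ C / ((n:ℝ)+1)^2)
    (x : ℝ) (hx : x ∈ Ico (0:ℝ) 1) :
    HasSum (fun n : ℕ => 2 * (∫ y in (0:ℝ)..1, f y * Real.sin (((n:ℝ)+1) * π * y))
        * Real.sin (((n:ℝ)+1) * π * x)) (f x) := by
  set c : ℕ → ℝ := fun n => ∫ y in (0:ℝ)..1, f y * Real.sin (((n:ℝ)+1) * π * y) with hcdef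
  have hpos : ∀ n : ℕ, fourierCoeff (heatAuxG f) ((n:ℤ)+1) = -Complex.I * (c n : ℂ) := by
    intro n
    rw [heatAuxG_coeff f hf2 hf0]
    have h1 : (((n:ℤ)+1 : ℤ) : ℝ) = (n:ℝ)+1 := by push_cast; ring
    rw [h1]
  have hneg : ∀ n : ℕ, fourierCoeff (heatAuxG f) (-((n:ℤ)+1)) = Complex.I * (c n : ℂ) := by
    intro n
    rw [heatAuxG_coeff f hf2 hf0]
    have h1 : ((-((n:ℤ)+1) : ℤ) : ℝ) = -((n:ℝ)+1) := by push_cast; ring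
    rw [h1]
    have h2 : (∫ y in (0:ℝ)..1, f y * Real.sin (-((n:ℝ)+1) * π * y)) = - c n := by
      rw [hcdef, ← intervalIntegral.integral_neg]
      apply intervalIntegral.integral_congr
      intro y _
      show f y * Real.sin (-((n:ℝ)+1) * π * y) = -(f y * Real.sin (((n:ℝ)+1) * π * y))
      rw [show -((n:ℝ)+1) * π * y = -(((n:ℝ)+1) * π * y) by ring, Real.sin_neg]
      ring
    rw [h2]
    push_cast
    ring
  have h0 : fourierCoeff (heatAuxG f) 0 = 0 := by
    rw [heatAuxG_coeff f hf2 hf0]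
    norm_num
  have hsum_aux : Summable (fun n : ℕ => C / ((n:ℝ)+1)^2) := by
    have := heatAux_summable_inv_sq.mul_left C
    refine this.congr fun n => ?_
    rw [mul_one_div]
  have hS : Summable (fun i : ℤ => fourierCoeff (heatAuxG f) i) := by
    apply Summable.of_nat_of_neg
    · apply (summable_nat_add_iff 1).mp
      refine Summable.of_norm_bounded hsum_aux fun n => ?_
      have h1 : ((n+1 : ℕ) : ℤ) = (n:ℤ)+1 := by push_cast; ring
      rw [h1, hpos n, norm_mul, norm_neg, Complex.norm_I, one_mul, Complex.norm_real,
        Real.norm_eq_abs]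
      exact hb n
    · apply (summable_nat_add_iff 1).mp
      refine Summable.of_norm_bounded hsum_aux fun n => ?_
      have h1 : (-((n+1 : ℕ) : ℤ)) = -((n:ℤ)+1) := by push_cast; ring
      rw [h1, hneg n, norm_mul, Complex.norm_I, one_mul, Complex.norm_real,
        Real.norm_eq_abs]
      exact hb n
  set Gc : C(AddCircle (2:ℝ), ℂ) := ⟨heatAuxG f, heatAuxG_continuous f hf2 hf0 hf1⟩ with hGcdef
  have hcoe : ⇑Gc = heatAuxG f := rfl
  have hS' : Summable (fourierCoeff (⇑Gc)) := by rw [hcoe]; exact hS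
  have hs := has_pointwise_sum_fourier_series_of_summable (f := Gc) hS' ((x : ℝ) : AddCircle (2:ℝ))
  rw [hcoe] at hs
  have hGx : heatAuxG f ((x : ℝ) : AddCircle (2:ℝ)) = ((f x : ℝ) : ℂ) := by
    unfold heatAuxG
    rw [AddCircle.liftIco_coe_apply (by
      constructor
      · linarith [hx.1]
      · linarith [hx.2])]
    rw [heatAuxF_eq_on_right f x hx.1]
  rw [hGx] at hs
  set A : ℤ → ℂ := fun i => fourierCoeff (heatAuxG f) i • fourier i ((x : ℝ) : AddCircle (2:ℝ))
    with hAdef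
  have hsA : HasSum A ((f x : ℝ) : ℂ) := hs
  have htot := hsA.nat_add_neg
  have hA0 : A 0 = 0 := by
    rw [hAdef]
    simp only [h0, zero_smul]
  rw [hA0, add_zero] at htot
  have hsum0 : ((f x : ℝ) : ℂ) + ∑ i ∈ Finset.range 1, (A (i:ℤ) + A (-(i:ℤ)))
      = ((f x : ℝ) : ℂ) := by
    rw [Finset.sum_range_one]
    norm_num [hA0]
  have hshift := (hasSum_nat_add_iff (f := fun n : ℕ => A (n:ℤ) + A (-(n:ℤ))) 1).mpr
    (by rw [hsum0]; exact htot)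
  have hterm : ∀ n : ℕ, A (((n+1:ℕ)):ℤ) + A (-((n+1:ℕ):ℤ))
      = ((2 * c n * Real.sin (((n:ℝ)+1) * π * x) : ℝ) : ℂ) := by
    intro n
    have hcast : ((n+1:ℕ):ℤ) = (n:ℤ)+1 := by push_cast; ring
    rw [hAdef]
    simp only [hcast]
    rw [hpos n, hneg n, smul_eq_mul, smul_eq_mul]
    rw [fourier_coe_apply, fourier_coe_apply]
    have := heatAuxE_pt2 ((n:ℤ)+1) (c n) x
    have h1 : ((((n:ℤ)+1 : ℤ)) : ℝ) = (n:ℝ)+1 := by push_cast; ring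
    rw [h1] at this
    convert this using 2 <;> norm_num
  have hreal : HasSum (fun n : ℕ => ((2 * c n * Real.sin (((n:ℝ)+1) * π * x) : ℝ) : ℂ))
      (((f x : ℝ)) : ℂ) := by
    have hfun : (fun n : ℕ => ((2 * c n * Real.sin (((n:ℝ)+1) * π * x) : ℝ) : ℂ))
        = fun n : ℕ => A (((n+1:ℕ)):ℤ) + A (-((n+1:ℕ):ℤ)) :=
      funext fun n => (hterm n).symm
    rw [hfun]
    exact hshift
  have := Complex.hasSum_ofReal.mp hreal
  refine this.congr fun n => ?_
  ring

end FourierInv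


noncomputable def heatC (f : ℝ → ℝ) (n : ℕ) : ℝ :=
  ∫ y in (0:ℝ)..1, f y * Real.sin (((n : ℝ) + 1) * π * y)

end HeatAux

/-- Let `f : [0,1] → ℝ` be twice continuously differentiable with
`f 0 = f 1 = 0` and `f'' 0 = f'' 1 = 0`. Then the series defining `u1` converges for
every `(x,t) ∈ [0,1] × [0,∞)`; `u1` is continuous and bounded on `[0,1] × [0,∞)`;
`u1(x,0) = f x`; `u1(0,t) = u1(1,t) = 0`; and for every `t > 0` and `x ∈ (0,1)` the
partial derivatives `∂u1/∂t` and `∂²u1/∂x²` exist and satisfy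
`∂u1/∂t (x,t) = ∂²u1/∂x² (x,t)`. -/
theorem u1_solves_heat_equation
    (f : ℝ → ℝ) (hf : ContDiffOn ℝ 2 f (Set.Icc 0 1))
    (hf0 : f 0 = 0) (hf1 : f 1 = 0)
    (hf''0 : derivWithin (derivWithin f (Set.Icc 0 1)) (Set.Icc 0 1) 0 = 0)
    (hf''1 : derivWithin (derivWithin f (Set.Icc 0 1)) (Set.Icc 0 1) 1 = 0) :
    (∀ x ∈ Set.Icc (0 : ℝ) 1, ∀ t ≥ (0 : ℝ),
      Summable (fun n : ℕ =>
        (∫ y in (0:ℝ)..1, f y * Real.sin (((n : ℝ) + 1) * π * y)) *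
          Real.exp (-(((n : ℝ) + 1) ^ 2) * π ^ 2 * t) *
            Real.sin (((n : ℝ) + 1) * π * x))) ∧
    ContinuousOn (fun p : ℝ × ℝ => u1 f p.1 p.2) (Set.Icc 0 1 ×ˢ Set.Ici 0) ∧
    (∃ B : ℝ, ∀ x ∈ Set.Icc (0 : ℝ) 1, ∀ t ≥ (0 : ℝ), |u1 f x t| ≤ B) ∧
    (∀ x ∈ Set.Icc (0 : ℝ) 1, u1 f x 0 = f x) ∧
    (∀ t ≥ (0 : ℝ), u1 f 0 t = 0 ∧ u1 f 1 t = 0) ∧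
    (∀ t > (0 : ℝ), ∀ x ∈ Set.Ioo (0 : ℝ) 1,
      DifferentiableAt ℝ (fun ξ => u1 f ξ t) x ∧
      DifferentiableAt ℝ (deriv (fun ξ => u1 f ξ t)) x ∧
      HasDerivAt (fun τ => u1 f x τ) (deriv (deriv (fun ξ => u1 f ξ t)) x) t) := by
  obtain ⟨C, hC0, hb⟩ := heatAux_coeff_bound f hf hf0 hf1
  have hcC : ∀ n : ℕ, |heatC f n| ≤ C := fun n => le_trans (hb n)
    (div_le_self hC0 (by nlinarith [Nat.cast_nonneg (α := ℝ) n]))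
  have hsumC : Summable (fun n : ℕ => C / ((n:ℝ)+1)^2) := by
    have := heatAux_summable_inv_sq.mul_left C
    exact this.congr fun n => by rw [mul_one_div]
  have hterm_bd : ∀ (x t : ℝ), 0 ≤ t → ∀ n : ℕ,
      |heatC f n * Real.exp (-(((n : ℝ) + 1) ^ 2) * π ^ 2 * t) *
          Real.sin (((n : ℝ) + 1) * π * x)|
        ≤ C / ((n:ℝ)+1)^2 := by
    intro x t ht n
    have hexp1 : Real.exp (-(((n:ℝ)+1)^2) * π^2 * t) ≤ 1 := by
      rw [Real.exp_le_one_iff]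
      have h1 : (0:ℝ) ≤ ((n:ℝ)+1)^2 * π^2 * t := by positivity
      nlinarith
    rw [abs_mul, abs_mul, abs_of_pos (Real.exp_pos _)]
    calc |heatC f n| * Real.exp (-(((n:ℝ)+1)^2) * π^2 * t) * |Real.sin (((n:ℝ)+1)*π*x)|
        ≤ (C / ((n:ℝ)+1)^2) * 1 * 1 := by
          gcongr
          · exact hb n
          · exact Real.abs_sin_le_one _
      _ = C / ((n:ℝ)+1)^2 := by ring
  have hsummable : ∀ (x t : ℝ), 0 ≤ t → Summable (fun n : ℕ =>
      heatC f n * Real.exp (-(((n : ℝ) + 1) ^ 2) * π ^ 2 * t) *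
        Real.sin (((n : ℝ) + 1) * π * x)) := by
    intro x t ht
    refine Summable.of_norm_bounded hsumC fun n => ?_
    rw [Real.norm_eq_abs]
    exact hterm_bd x t ht n
  -- boundary values
  have hbd0 : ∀ t : ℝ, u1 f 0 t = 0 := by
    intro t
    have hz : ∀ n : ℕ, Real.sin (((n:ℝ)+1)*π*0) = 0 := fun n => by
      rw [mul_zero, Real.sin_zero]
    calc u1 f 0 t = 2 * ∑' n : ℕ, heatC f n * Real.exp (-(((n : ℝ) + 1) ^ 2) * π ^ 2 * t)
          * Real.sin (((n : ℝ) + 1) * π * 0) := rfl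
      _ = 2 * ∑' _n : ℕ, (0:ℝ) := by
          congr 1
          exact tsum_congr fun n => by rw [hz n, mul_zero]
      _ = 0 := by rw [tsum_zero, mul_zero]
  have hbd1 : ∀ t : ℝ, u1 f 1 t = 0 := by
    intro t
    have hz : ∀ n : ℕ, Real.sin (((n:ℝ)+1)*π*1) = 0 := fun n => by
      rw [mul_one, show ((n:ℝ)+1)*π = ((n+1:ℕ):ℝ)*π by push_cast; ring, Real.sin_nat_mul_pi]
    calc u1 f 1 t = 2 * ∑' n : ℕ, heatC f n * Real.exp (-(((n : ℝ) + 1) ^ 2) * π ^ 2 * t)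
          * Real.sin (((n : ℝ) + 1) * π * 1) := rfl
      _ = 2 * ∑' _n : ℕ, (0:ℝ) := by
          congr 1
          exact tsum_congr fun n => by rw [hz n, mul_zero]
      _ = 0 := by rw [tsum_zero, mul_zero]
  refine ⟨fun x _ t ht => hsummable x t ht, ?_, ?_, ?_, fun t _ => ⟨hbd0 t, hbd1 t⟩, ?_⟩
  · -- continuity
    have hts : ContinuousOn (fun p : ℝ × ℝ => ∑' n : ℕ,
        heatC f n * Real.exp (-(((n : ℝ) + 1) ^ 2) * π ^ 2 * p.2)
          * Real.sin (((n : ℝ) + 1) * π * p.1)) (Set.Icc 0 1 ×ˢ Set.Ici 0) := by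
      apply continuousOn_tsum (u := fun n : ℕ => C / ((n:ℝ)+1)^2) ?_ hsumC ?_
      · intro i
        apply Continuous.continuousOn
        refine (continuous_const.mul ?_).mul ?_
        · exact Real.continuous_exp.comp (continuous_const.mul continuous_snd)
        · exact Real.continuous_sin.comp (continuous_const.mul continuous_fst)
      · intro n p hp
        rw [Real.norm_eq_abs]
        exact hterm_bd p.1 p.2 hp.2 n
    exact continuousOn_const.mul hts
  · -- boundedness
    refine ⟨2 * ∑' n : ℕ, C / ((n:ℝ)+1)^2, ?_⟩
    intro x _ t ht
    have habs : Summable (fun n : ℕ => |heatC f n * Real.exp (-(((n : ℝ) + 1) ^ 2) * π ^ 2 * t)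
        * Real.sin (((n : ℝ) + 1) * π * x)|) := (hsummable x t ht).abs
    have habs' : Summable fun n : ℕ => ‖heatC f n * Real.exp (-(((n : ℝ) + 1) ^ 2) * π ^ 2 * t)
        * Real.sin (((n : ℝ) + 1) * π * x)‖ := by
      simp only [Real.norm_eq_abs]
      exact habs
    have hS : ‖∑' n : ℕ, heatC f n * Real.exp (-(((n : ℝ) + 1) ^ 2) * π ^ 2 * t)
        * Real.sin (((n : ℝ) + 1) * π * x)‖ ≤ ∑' n : ℕ, C / ((n:ℝ)+1)^2 := by
      refine le_trans (norm_tsum_le_tsum_norm habs') (Summable.tsum_le_tsum ?_ habs' hsumC)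
      intro n
      rw [Real.norm_eq_abs]
      exact hterm_bd x t ht n
    calc |u1 f x t| = 2 * ‖∑' n : ℕ, heatC f n * Real.exp (-(((n : ℝ) + 1) ^ 2) * π ^ 2 * t)
          * Real.sin (((n : ℝ) + 1) * π * x)‖ := by
          rw [show u1 f x t = 2 * ∑' n : ℕ, heatC f n
            * Real.exp (-(((n : ℝ) + 1) ^ 2) * π ^ 2 * t)
            * Real.sin (((n : ℝ) + 1) * π * x) from rfl, abs_mul, Real.norm_eq_abs]
          norm_num
      _ ≤ 2 * ∑' n : ℕ, C / ((n:ℝ)+1)^2 := by linarith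
  · -- initial condition
    intro x hx
    rcases eq_or_lt_of_le hx.2 with h1 | h1
    · rw [h1, hbd1 0, ← h1]
      rw [h1, hf1]
    · have hinv := heatAux_fourier_inversion f hf.continuousOn hf0 hf1 C hb x ⟨hx.1, h1⟩
      have hzero : ∀ n : ℕ, Real.exp (-(((n : ℝ) + 1) ^ 2) * π ^ 2 * 0) = 1 := fun n => by
        rw [mul_zero, Real.exp_zero]
      calc u1 f x 0 = 2 * ∑' n : ℕ, heatC f n * Real.exp (-(((n : ℝ) + 1) ^ 2) * π ^ 2 * 0)
            * Real.sin (((n : ℝ) + 1) * π * x) := rfl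
        _ = 2 * ∑' n : ℕ, heatC f n * Real.sin (((n : ℝ) + 1) * π * x) := by
            congr 1
            exact tsum_congr fun n => by rw [hzero n, mul_one]
        _ = ∑' n : ℕ, 2 * (heatC f n * Real.sin (((n : ℝ) + 1) * π * x)) := tsum_mul_left.symm
        _ = f x := by
            rw [show (fun n : ℕ => 2 * (heatC f n * Real.sin (((n:ℝ)+1)*π*x)))
              = fun n : ℕ => 2 * heatC f n * Real.sin (((n:ℝ)+1)*π*x)
              from funext fun n => by ring]
            exact hinv.tsum_eq
  · -- the PDE
    intro t ht x _
    have hsump : ∀ (p : ℕ) (s : ℝ), 0 < s → Summable (fun n : ℕ =>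
        ((n:ℝ)+1)^p * Real.exp (-(((n:ℝ)+1)^2) * π^2 * s)) := by
      intro p s hs
      have := heatAux_summable_exp (π^2*s) (by positivity) p
      refine this.congr fun n => ?_
      congr 2
      ring
    -- first x-derivative, termwise
    have hd1 : ∀ (n : ℕ) (z : ℝ), HasDerivAt
        (fun w => heatC f n * Real.exp (-(((n:ℝ)+1)^2) * π^2 * t) * Real.sin (((n:ℝ)+1)*π*w))
        (heatC f n * Real.exp (-(((n:ℝ)+1)^2) * π^2 * t)
          * (Real.cos (((n:ℝ)+1)*π*z) * (((n:ℝ)+1)*π*1))) z := by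
      intro n z
      exact ((Real.hasDerivAt_sin ((((n:ℝ)+1)*π)*z)).comp z
        ((hasDerivAt_id z).const_mul (((n:ℝ)+1)*π))).const_mul _
    have hbound1 : ∀ (n : ℕ) (z : ℝ),
        ‖heatC f n * Real.exp (-(((n:ℝ)+1)^2) * π^2 * t)
          * (Real.cos (((n:ℝ)+1)*π*z) * (((n:ℝ)+1)*π*1))‖
        ≤ C * π * (((n:ℝ)+1)^1 * Real.exp (-(((n:ℝ)+1)^2) * π^2 * t)) := by
      intro n z
      have hkpos : (0:ℝ) < ((n:ℝ)+1)*π*1 := by positivity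
      rw [Real.norm_eq_abs]
      rw [abs_mul, abs_mul, abs_mul, abs_of_pos (Real.exp_pos _), abs_of_pos hkpos]
      calc |heatC f n| * Real.exp (-(((n:ℝ)+1)^2) * π^2 * t)
            * (|Real.cos (((n:ℝ)+1)*π*z)| * (((n:ℝ)+1)*π*1))
          ≤ C * Real.exp (-(((n:ℝ)+1)^2) * π^2 * t) * (1 * (((n:ℝ)+1)*π*1)) := by
            gcongr
            · exact hcC n
            · exact Real.abs_cos_le_one _
        _ = C * π * (((n:ℝ)+1)^1 * Real.exp (-(((n:ℝ)+1)^2) * π^2 * t)) := by ring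
    have hD1 : ∀ ξ : ℝ, HasDerivAt
        (fun w : ℝ => ∑' n : ℕ, heatC f n * Real.exp (-(((n:ℝ)+1)^2) * π^2 * t)
          * Real.sin (((n:ℝ)+1)*π*w))
        (∑' n : ℕ, heatC f n * Real.exp (-(((n:ℝ)+1)^2) * π^2 * t)
          * (Real.cos (((n:ℝ)+1)*π*ξ) * (((n:ℝ)+1)*π*1))) ξ := by
      intro ξ
      refine hasDerivAt_tsum (y₀ := 0)
        ((hsump 1 t ht).mul_left (C*π)) hd1 (fun n z => hbound1 n z) ?_ ξ
      exact summable_zero.congr fun n => by simp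
    have hU1 : ∀ ξ : ℝ, HasDerivAt (fun z : ℝ => u1 f z t)
        (2 * ∑' n : ℕ, heatC f n * Real.exp (-(((n:ℝ)+1)^2) * π^2 * t)
          * (Real.cos (((n:ℝ)+1)*π*ξ) * (((n:ℝ)+1)*π*1))) ξ := fun ξ => (hD1 ξ).const_mul 2
    have hderiv_eq : deriv (fun ξ => u1 f ξ t)
        = fun ξ => 2 * ∑' n : ℕ, heatC f n * Real.exp (-(((n:ℝ)+1)^2) * π^2 * t)
          * (Real.cos (((n:ℝ)+1)*π*ξ) * (((n:ℝ)+1)*π*1)) := funext fun ξ => (hU1 ξ).deriv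
    -- second x-derivative, termwise
    have hd2 : ∀ (n : ℕ) (z : ℝ), HasDerivAt
        (fun w => heatC f n * Real.exp (-(((n:ℝ)+1)^2) * π^2 * t)
          * (Real.cos (((n:ℝ)+1)*π*w) * (((n:ℝ)+1)*π*1)))
        (heatC f n * Real.exp (-(((n:ℝ)+1)^2) * π^2 * t)
          * (-Real.sin (((n:ℝ)+1)*π*z) * (((n:ℝ)+1)*π*1) * (((n:ℝ)+1)*π*1))) z := by
      intro n z
      exact ((((Real.hasDerivAt_cos ((((n:ℝ)+1)*π)*z)).comp z
        ((hasDerivAt_id z).const_mul (((n:ℝ)+1)*π))).mul_const (((n:ℝ)+1)*π*1)).const_mul _)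
    have hbound2 : ∀ (n : ℕ) (z : ℝ),
        ‖heatC f n * Real.exp (-(((n:ℝ)+1)^2) * π^2 * t)
          * (-Real.sin (((n:ℝ)+1)*π*z) * (((n:ℝ)+1)*π*1) * (((n:ℝ)+1)*π*1))‖
        ≤ C * π^2 * (((n:ℝ)+1)^2 * Real.exp (-(((n:ℝ)+1)^2) * π^2 * t)) := by
      intro n z
      have hkpos : (0:ℝ) < ((n:ℝ)+1)*π*1 := by positivity
      rw [Real.norm_eq_abs]
      rw [abs_mul, abs_mul, abs_mul, abs_mul, abs_neg, abs_of_pos (Real.exp_pos _),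
        abs_of_pos hkpos]
      calc |heatC f n| * Real.exp (-(((n:ℝ)+1)^2) * π^2 * t)
            * (|Real.sin (((n:ℝ)+1)*π*z)| * (((n:ℝ)+1)*π*1) * (((n:ℝ)+1)*π*1))
          ≤ C * Real.exp (-(((n:ℝ)+1)^2) * π^2 * t)
            * (1 * (((n:ℝ)+1)*π*1) * (((n:ℝ)+1)*π*1)) := by
            gcongr
            · exact hcC n
            · exact Real.abs_sin_le_one _
        _ = C * π^2 * (((n:ℝ)+1)^2 * Real.exp (-(((n:ℝ)+1)^2) * π^2 * t)) := by ring
    have hD2 : ∀ ξ : ℝ, HasDerivAt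
        (fun w : ℝ => ∑' n : ℕ, heatC f n * Real.exp (-(((n:ℝ)+1)^2) * π^2 * t)
          * (Real.cos (((n:ℝ)+1)*π*w) * (((n:ℝ)+1)*π*1)))
        (∑' n : ℕ, heatC f n * Real.exp (-(((n:ℝ)+1)^2) * π^2 * t)
          * (-Real.sin (((n:ℝ)+1)*π*ξ) * (((n:ℝ)+1)*π*1) * (((n:ℝ)+1)*π*1))) ξ := by
      intro ξ
      refine hasDerivAt_tsum (y₀ := 0)
        ((hsump 2 t ht).mul_left (C*π^2)) hd2 (fun n z => hbound2 n z) ?_ ξ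
      refine Summable.of_norm_bounded ((hsump 1 t ht).mul_left (C*π)) fun n => hbound1 n 0
    have hU2 : ∀ ξ : ℝ, HasDerivAt (deriv (fun ξ => u1 f ξ t))
        (2 * ∑' n : ℕ, heatC f n * Real.exp (-(((n:ℝ)+1)^2) * π^2 * t)
          * (-Real.sin (((n:ℝ)+1)*π*ξ) * (((n:ℝ)+1)*π*1) * (((n:ℝ)+1)*π*1))) ξ := by
      intro ξ
      rw [hderiv_eq]
      exact (hD2 ξ).const_mul 2
    -- time derivative, termwise
    have hdT : ∀ (n : ℕ) (τ : ℝ), HasDerivAt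
        (fun s => heatC f n * Real.exp (-(((n:ℝ)+1)^2) * π^2 * s) * Real.sin (((n:ℝ)+1)*π*x))
        (heatC f n * (Real.exp (-(((n:ℝ)+1)^2) * π^2 * τ) * (-(((n:ℝ)+1)^2) * π^2 * 1))
          * Real.sin (((n:ℝ)+1)*π*x)) τ := by
      intro n τ
      exact (((Real.hasDerivAt_exp ((-(((n:ℝ)+1)^2) * π^2)*τ)).comp τ
        ((hasDerivAt_id τ).const_mul (-(((n:ℝ)+1)^2) * π^2))).const_mul
          (heatC f n)).mul_const _
    have hboundT : ∀ (n : ℕ), ∀ τ ∈ Set.Ioi (t/2),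
        ‖heatC f n * (Real.exp (-(((n:ℝ)+1)^2) * π^2 * τ) * (-(((n:ℝ)+1)^2) * π^2 * 1))
          * Real.sin (((n:ℝ)+1)*π*x)‖
        ≤ C * π^2 * (((n:ℝ)+1)^2 * Real.exp (-(((n:ℝ)+1)^2) * π^2 * (t/2))) := by
      intro n τ hτ
      have hτ' : t/2 ≤ τ := le_of_lt hτ
      have hbneg : (-(((n:ℝ)+1)^2) * π^2 * 1) ≤ 0 := by
        have h1 : (0:ℝ) ≤ ((n:ℝ)+1)^2 * π^2 * 1 := by positivity
        nlinarith
      have hmono : Real.exp (-(((n:ℝ)+1)^2) * π^2 * τ)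
          ≤ Real.exp (-(((n:ℝ)+1)^2) * π^2 * (t/2)) := by
        apply Real.exp_le_exp.2
        have h1 : (0:ℝ) ≤ ((n:ℝ)+1)^2 * π^2 := by positivity
        nlinarith
      rw [Real.norm_eq_abs]
      rw [abs_mul, abs_mul, abs_mul, abs_of_pos (Real.exp_pos _), abs_of_nonpos hbneg]
      have hK : (0:ℝ) ≤ -(-(((n:ℝ)+1)^2) * π^2 * 1) := neg_nonneg.mpr hbneg
      have hmid : Real.exp (-(((n:ℝ)+1)^2) * π^2 * τ) * -(-(((n:ℝ)+1)^2) * π^2 * 1)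
          ≤ Real.exp (-(((n:ℝ)+1)^2) * π^2 * (t/2)) * -(-(((n:ℝ)+1)^2) * π^2 * 1) :=
        mul_le_mul_of_nonneg_right hmono hK
      have step1 : |heatC f n| * (Real.exp (-(((n:ℝ)+1)^2) * π^2 * τ)
            * -(-(((n:ℝ)+1)^2) * π^2 * 1))
          ≤ C * (Real.exp (-(((n:ℝ)+1)^2) * π^2 * (t/2)) * -(-(((n:ℝ)+1)^2) * π^2 * 1)) :=
        mul_le_mul (hcC n) hmid (mul_nonneg (Real.exp_pos _).le hK) hC0
      calc |heatC f n| * (Real.exp (-(((n:ℝ)+1)^2) * π^2 * τ) * -(-(((n:ℝ)+1)^2) * π^2 * 1))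
            * |Real.sin (((n:ℝ)+1)*π*x)|
          ≤ C * (Real.exp (-(((n:ℝ)+1)^2) * π^2 * (t/2)) * -(-(((n:ℝ)+1)^2) * π^2 * 1)) * 1 :=
            mul_le_mul step1 (Real.abs_sin_le_one _) (abs_nonneg _)
              (mul_nonneg hC0 (mul_nonneg (Real.exp_pos _).le hK))
        _ = C * π^2 * (((n:ℝ)+1)^2 * Real.exp (-(((n:ℝ)+1)^2) * π^2 * (t/2))) := by ring
    have hmemt : t ∈ Set.Ioi (t/2) := by
      simp only [Set.mem_Ioi]
      linarith
    have hDT : HasDerivAt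
        (fun τ : ℝ => ∑' n : ℕ, heatC f n * Real.exp (-(((n:ℝ)+1)^2) * π^2 * τ)
          * Real.sin (((n:ℝ)+1)*π*x))
        (∑' n : ℕ, heatC f n * (Real.exp (-(((n:ℝ)+1)^2) * π^2 * t)
          * (-(((n:ℝ)+1)^2) * π^2 * 1)) * Real.sin (((n:ℝ)+1)*π*x)) t := by
      refine hasDerivAt_tsum_of_isPreconnected
        ((hsump 2 (t/2) (by linarith)).mul_left (C*π^2)) isOpen_Ioi isPreconnected_Ioi
        (fun n τ _ => hdT n τ) (fun n τ hτ => hboundT n τ hτ) hmemt ?_ hmemt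
      refine Summable.of_norm_bounded ((hsump 0 t ht).mul_left C) fun n => ?_
      rw [Real.norm_eq_abs, abs_mul, abs_mul, abs_of_pos (Real.exp_pos _)]
      calc |heatC f n| * Real.exp (-(((n:ℝ)+1)^2) * π^2 * t) * |Real.sin (((n:ℝ)+1)*π*x)|
          ≤ C * Real.exp (-(((n:ℝ)+1)^2) * π^2 * t) * 1 := by
            gcongr
            · exact hcC n
            · exact Real.abs_sin_le_one _
        _ = C * (((n:ℝ)+1)^0 * Real.exp (-(((n:ℝ)+1)^2) * π^2 * t)) := by ring
    have hT : HasDerivAt (fun τ => u1 f x τ)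
        (2 * ∑' n : ℕ, heatC f n * (Real.exp (-(((n:ℝ)+1)^2) * π^2 * t)
          * (-(((n:ℝ)+1)^2) * π^2 * 1)) * Real.sin (((n:ℝ)+1)*π*x)) t := hDT.const_mul 2
    refine ⟨(hU1 x).differentiableAt, (hU2 x).differentiableAt, ?_⟩
    have hdd : deriv (deriv (fun ξ => u1 f ξ t)) x
        = 2 * ∑' n : ℕ, heatC f n * Real.exp (-(((n:ℝ)+1)^2) * π^2 * t)
          * (-Real.sin (((n:ℝ)+1)*π*x) * (((n:ℝ)+1)*π*1) * (((n:ℝ)+1)*π*1)) := (hU2 x).deriv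
    rw [hdd, show (2 * ∑' n : ℕ, heatC f n * Real.exp (-(((n:ℝ)+1)^2) * π^2 * t)
          * (-Real.sin (((n:ℝ)+1)*π*x) * (((n:ℝ)+1)*π*1) * (((n:ℝ)+1)*π*1)))
        = 2 * ∑' n : ℕ, heatC f n * (Real.exp (-(((n:ℝ)+1)^2) * π^2 * t)
          * (-(((n:ℝ)+1)^2) * π^2 * 1)) * Real.sin (((n:ℝ)+1)*π*x) from by
        congr 1
        exact tsum_congr fun n => by ring]
    exact hT
end
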